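/- arXiv:2304.02136 — 2 statements merged into one kernel-verified Lean document; each statement's English description precedes it below -/
import Mathlib

section
/- Let μ₁, μ₂ > 0. The set of positive equilibria of Kopel's model has exactly two elements if and only if R₁ = 0 and (μ₁, μ₂) ≠ (3, 3). -/
/-- The cubic whose roots in `(0,1)` are the first coordinates of the positive
equilibria of Kopel's model. -/
def kopelF (m n x : ℝ) : ℝ :=
  m * n ^ 2 * x ^ 3 - 2 * m * n ^ 2 * x ^ 2 + m * n * (n + 1) * x + (1 - m * n)

set_option maxHeartbeats 2000000 in
/-- For `μ₁, μ₂ > 0`, Kopel's model has exactly two positive equilibria iff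
`R₁ = 0` and `(μ₁, μ₂) ≠ (3, 3)`. -/
theorem kopel_two_positive_equilibria_iff (μ₁ μ₂ : ℝ) (hμ₁ : 0 < μ₁) (hμ₂ : 0 < μ₂) :
    ({p : ℝ × ℝ | p.1 = μ₁ * p.2 * (1 - p.2) ∧ p.2 = μ₂ * p.1 * (1 - p.1) ∧
        0 < p.1 ∧ 0 < p.2}).ncard = 2 ↔
      (μ₁ ^ 2 * μ₂ ^ 2 - 4 * μ₁ ^ 2 * μ₂ - 4 * μ₁ * μ₂ ^ 2 + 18 * μ₁ * μ₂ - 27 = 0 ∧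
        ¬(μ₁ = 3 ∧ μ₂ = 3)) := by
  set S : Set ℝ := {x : ℝ | kopelF μ₁ μ₂ x = 0 ∧ 0 < x ∧ x < 1} with hSdef
  -- Step 1: the equilibrium set is the image of S
  have himg : {p : ℝ × ℝ | p.1 = μ₁ * p.2 * (1 - p.2) ∧ p.2 = μ₂ * p.1 * (1 - p.1) ∧
      0 < p.1 ∧ 0 < p.2} = (fun x : ℝ => (x, μ₂ * x * (1 - x))) '' S := by
    ext ⟨x, y⟩
    simp only [Set.mem_setOf_eq, Set.mem_image, hSdef, Prod.mk.injEq]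
    constructor
    · rintro ⟨h1, h2, hx, hy⟩
      subst h2
      have hx1 : x < 1 := by
        by_contra hc
        push_neg at hc
        nlinarith [mul_pos hμ₂ hx]
      have hx3 : x * kopelF μ₁ μ₂ x = 0 := by
        unfold kopelF; linear_combination h1
      have hfx : kopelF μ₁ μ₂ x = 0 :=
        (mul_eq_zero.mp hx3).resolve_left (ne_of_gt hx)
      exact ⟨x, ⟨hfx, hx, hx1⟩, rfl, rfl⟩
    · rintro ⟨z, ⟨hfz, hz0, hz1⟩, rfl, rfl⟩
      refine ⟨?_, rfl, hz0, ?_⟩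
      · unfold kopelF at hfz; linear_combination z * hfz
      · exact mul_pos (mul_pos hμ₂ hz0) (by linarith)
  rw [himg, Set.ncard_image_of_injective S (fun a b hab => congrArg Prod.fst hab)]
  constructor
  · -- forward direction
    intro h2
    obtain ⟨r, s, hrs, hS⟩ := Set.ncard_eq_two.mp h2
    have hrS : r ∈ S := by rw [hS]; exact Set.mem_insert r {s}
    have hsS : s ∈ S := by rw [hS]; exact Set.mem_insert_of_mem r rfl
    obtain ⟨hfr, hr0, hr1⟩ := hrS
    obtain ⟨hfs, hs0, hs1⟩ := hsS
    have hfr' := hfr; unfold kopelF at hfr'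
    have hfs' := hfs; unfold kopelF at hfs'
    -- μ₁μ₂ > 1 since the cubic has a root in (0,1)
    have hmn1 : 1 < μ₁ * μ₂ := by
      by_contra hc
      push_neg at hc
      nlinarith [mul_pos (mul_pos hμ₁ hμ₂) hr0, sq_nonneg (r - 1),
        mul_nonneg (mul_nonneg (mul_nonneg hμ₁.le hμ₂.le) hr0.le)
          (mul_nonneg hμ₂.le (sq_nonneg (r - 1)))]
    -- linear remainder vanishes at two distinct points
    have h1 : (μ₁ * μ₂ * (μ₂ + 1) -
        μ₁ * μ₂ ^ 2 * (r * s + r * (2 - r - s) + s * (2 - r - s))) * r +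
        ((1 - μ₁ * μ₂) + μ₁ * μ₂ ^ 2 * (r * s * (2 - r - s))) = 0 := by
      linear_combination hfr'
    have h2' : (μ₁ * μ₂ * (μ₂ + 1) -
        μ₁ * μ₂ ^ 2 * (r * s + r * (2 - r - s) + s * (2 - r - s))) * s +
        ((1 - μ₁ * μ₂) + μ₁ * μ₂ ^ 2 * (r * s * (2 - r - s))) = 0 := by
      linear_combination hfs'
    have h3 : (μ₁ * μ₂ * (μ₂ + 1) -
        μ₁ * μ₂ ^ 2 * (r * s + r * (2 - r - s) + s * (2 - r - s))) * (r - s) = 0 := by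
      linear_combination h1 - h2'
    have hA : μ₁ * μ₂ * (μ₂ + 1) -
        μ₁ * μ₂ ^ 2 * (r * s + r * (2 - r - s) + s * (2 - r - s)) = 0 :=
      (mul_eq_zero.mp h3).resolve_right (sub_ne_zero.mpr hrs)
    have hB : (1 - μ₁ * μ₂) + μ₁ * μ₂ ^ 2 * (r * s * (2 - r - s)) = 0 := by
      linear_combination h1 - r * hA
    -- the third root u = 2 - r - s is also a root
    have hfu : kopelF μ₁ μ₂ (2 - r - s) = 0 := by
      unfold kopelF; linear_combination (2 - r - s) * hA + hB
    have hfu' := hfu; unfold kopelF at hfu'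
    -- u ∈ (0,1)
    have hP : 0 < μ₁ * μ₂ * (μ₂ * ((2 - r - s) - 1) ^ 2 + 1) := by positivity
    have huP : (2 - r - s) * (μ₁ * μ₂ * (μ₂ * ((2 - r - s) - 1) ^ 2 + 1)) = μ₁ * μ₂ - 1 := by
      linear_combination hfu'
    have hu0 : 0 < 2 - r - s := by
      by_contra hc
      push_neg at hc
      nlinarith [huP, hP, hmn1]
    have hu1 : 2 - r - s < 1 := by
      by_contra hc
      push_neg at hc
      have huG : (2 - r - s - 1) *
          (μ₁ * μ₂ * (μ₂ * (2 - r - s) * (2 - r - s - 1) + 1)) = -1 := by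
        linear_combination hfu'
      have hprod : 0 ≤ (2 - r - s) * (2 - r - s - 1) :=
        mul_nonneg (by linarith) (by linarith)
      have hGpos : 0 < μ₁ * μ₂ * (μ₂ * (2 - r - s) * (2 - r - s - 1) + 1) :=
        mul_pos (mul_pos hμ₁ hμ₂) (by nlinarith [hprod, hμ₂])
      nlinarith [huG, mul_nonneg (by linarith : (0:ℝ) ≤ 2 - r - s - 1) hGpos.le]
    have humem : (2 - r - s) ∈ S := ⟨hfu, hu0, hu1⟩
    rw [hS] at humem
    have hu_mem : (2 - r - s) = r ∨ (2 - r - s) = s := by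
      simpa using humem
    -- discriminant identity
    have hdisc : μ₁ ^ 2 * μ₂ ^ 4 *
        (μ₁ ^ 2 * μ₂ ^ 2 - 4 * μ₁ ^ 2 * μ₂ - 4 * μ₁ * μ₂ ^ 2 + 18 * μ₁ * μ₂ - 27) =
        (μ₁ * μ₂ ^ 2) ^ 4 *
          ((r - s) * (r - (2 - r - s)) * (s - (2 - r - s))) ^ 2 := by
      linear_combination
        (18 * (μ₁ * μ₂ ^ 2) * (-2 * μ₁ * μ₂ ^ 2) * (1 - μ₁ * μ₂) +
          (-2 * μ₁ * μ₂ ^ 2) ^ 2 * (μ₁ * μ₂ * (μ₂ + 1) +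
            μ₁ * μ₂ ^ 2 * (r * s + r * (2 - r - s) + s * (2 - r - s))) -
          4 * (μ₁ * μ₂ ^ 2) * ((μ₁ * μ₂ * (μ₂ + 1)) ^ 2 +
            (μ₁ * μ₂ * (μ₂ + 1)) * (μ₁ * μ₂ ^ 2 * (r * s + r * (2 - r - s) + s * (2 - r - s))) +
            (μ₁ * μ₂ ^ 2 * (r * s + r * (2 - r - s) + s * (2 - r - s))) ^ 2)) * hA +
        (18 * (μ₁ * μ₂ ^ 2) * (-2 * μ₁ * μ₂ ^ 2) *
            (μ₁ * μ₂ ^ 2 * (r * s + r * (2 - r - s) + s * (2 - r - s))) -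
          4 * (-2 * μ₁ * μ₂ ^ 2) ^ 3 -
          27 * (μ₁ * μ₂ ^ 2) ^ 2 * ((1 - μ₁ * μ₂) -
            μ₁ * μ₂ ^ 2 * (r * s * (2 - r - s)))) * hB
    constructor
    · -- R₁ = 0
      have hz : μ₁ ^ 2 * μ₂ ^ 4 *
          (μ₁ ^ 2 * μ₂ ^ 2 - 4 * μ₁ ^ 2 * μ₂ - 4 * μ₁ * μ₂ ^ 2 + 18 * μ₁ * μ₂ - 27) = 0 := by
        rcases hu_mem with hu | hu
        · rw [hdisc, show r - (2 - r - s) = 0 by linarith]; ring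
        · rw [hdisc, show s - (2 - r - s) = 0 by linarith]; ring
      have hne : (μ₁ ^ 2 * μ₂ ^ 4 : ℝ) ≠ 0 := by positivity
      exact (mul_eq_zero.mp hz).resolve_left hne
    · -- not both equal to 3
      rintro ⟨h31, h32⟩
      subst h31; subst h32
      have hcr : (3 * r - 2) ^ 3 = 0 := by linear_combination hfr'
      have hcs : (3 * s - 2) ^ 3 = 0 := by linear_combination hfs'
      have hr2 : 3 * r - 2 = 0 := by
        exact pow_eq_zero_iff (three_ne_zero) |>.mp hcr
      have hs2 : 3 * s - 2 = 0 := by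
        exact pow_eq_zero_iff (three_ne_zero) |>.mp hcs
      exact hrs (by linarith)
  · -- backward direction
    rintro ⟨hR1, hne⟩
    have hn3 : μ₂ ≠ 3 := by
      rintro rfl
      apply hne
      have h : (μ₁ - 3) ^ 2 = 0 := by linear_combination (-1/3 : ℝ) * hR1
      have := pow_eq_zero_iff (two_ne_zero) |>.mp h
      exact ⟨by linarith, rfl⟩
    have hm3 : μ₁ ≠ 3 := by
      rintro rfl
      apply hne
      have h : (μ₂ - 3) ^ 2 = 0 := by linear_combination (-1/3 : ℝ) * hR1
      have := pow_eq_zero_iff (two_ne_zero) |>.mp h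
      exact ⟨rfl, by linarith⟩
    have hn3' : 3 < μ₂ := by
      have key : 4 * μ₂ * (μ₂ - 3) ^ 3 = μ₂ ^ 2 * (μ₁ * (μ₂ - 4) + 9 - 2 * μ₂) ^ 2 := by
        linear_combination (-(μ₂ * (μ₂ - 4))) * hR1
      by_contra hc
      push_neg at hc
      have hlt : μ₂ < 3 := lt_of_le_of_ne hc hn3
      have hsq : 0 < (μ₂ - 3) ^ 2 := pow_two_pos_of_ne_zero (sub_ne_zero.mpr hn3)
      nlinarith [key, mul_nonneg (sq_nonneg μ₂) (sq_nonneg (μ₁ * (μ₂ - 4) + 9 - 2 * μ₂)),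
        mul_pos (mul_pos (by linarith : (0:ℝ) < 4 * μ₂) (by linarith : (0:ℝ) < 3 - μ₂)) hsq]
    have hm3' : 3 < μ₁ := by
      have key : 4 * μ₁ * (μ₁ - 3) ^ 3 = μ₁ ^ 2 * (μ₂ * (μ₁ - 4) + 9 - 2 * μ₁) ^ 2 := by
        linear_combination (-(μ₁ * (μ₁ - 4))) * hR1
      by_contra hc
      push_neg at hc
      have hlt : μ₁ < 3 := lt_of_le_of_ne hc hm3
      have hsq : 0 < (μ₁ - 3) ^ 2 := pow_two_pos_of_ne_zero (sub_ne_zero.mpr hm3)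
      nlinarith [key, mul_nonneg (sq_nonneg μ₁) (sq_nonneg (μ₂ * (μ₁ - 4) + 9 - 2 * μ₁)),
        mul_pos (mul_pos (by linarith : (0:ℝ) < 4 * μ₁) (by linarith : (0:ℝ) < 3 - μ₁)) hsq]
    have hmn9 : 9 < μ₁ * μ₂ := by nlinarith
    have hW : 0 < μ₁ * μ₂ ^ 2 - 4 * μ₁ * μ₂ + 9 := by
      have hq : (μ₁ * μ₂ ^ 2 - 4 * μ₁ * μ₂ + 9) ^ 2 + 9 * (μ₂ - 3) ^ 2 =
          2 * (2 * μ₂ - 3) * (μ₂ - 3) * (μ₁ * μ₂ ^ 2 - 4 * μ₁ * μ₂ + 9) := by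
        linear_combination (μ₂ * (μ₂ - 4)) * hR1
      by_contra hc
      push_neg at hc
      have hpos : 0 < 2 * (2 * μ₂ - 3) * (μ₂ - 3) := by nlinarith
      nlinarith [hq, sq_nonneg (μ₁ * μ₂ ^ 2 - 4 * μ₁ * μ₂ + 9),
        mul_nonpos_of_nonneg_of_nonpos hpos.le hc,
        pow_two_pos_of_ne_zero (sub_ne_zero.mpr hn3)]
    have hQ : 0 < 2 * μ₁ * μ₂ * (μ₂ - 3) :=
      mul_pos (mul_pos (mul_pos two_pos hμ₁) hμ₂) (by linarith)
    set r : ℝ := (2 * μ₁ * μ₂ ^ 2 - 7 * μ₁ * μ₂ + 9) / (2 * μ₁ * μ₂ * (μ₂ - 3)) with hrdef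
    set s : ℝ := (2 * μ₁ * μ₂ - 18) / (2 * μ₁ * μ₂ * (μ₂ - 3)) with hsdef
    -- scaled factorization of the cubic
    have hfact : ∀ x : ℝ, (2 * μ₁ * μ₂ * (μ₂ - 3)) ^ 3 * kopelF μ₁ μ₂ x =
        μ₁ * μ₂ ^ 2 * ((2 * μ₁ * μ₂ * (μ₂ - 3)) * x - (2 * μ₁ * μ₂ ^ 2 - 7 * μ₁ * μ₂ + 9)) ^ 2 *
          ((2 * μ₁ * μ₂ * (μ₂ - 3)) * x - (2 * μ₁ * μ₂ - 18)) := by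
      intro x
      unfold kopelF
      linear_combination (54 * μ₁ * μ₂ ^ 2 - 54 * μ₁ ^ 2 * μ₂ ^ 3 + 54 * μ₁ ^ 2 * μ₂ ^ 3 * x +
        16 * μ₁ ^ 2 * μ₂ ^ 4 - 18 * μ₁ ^ 2 * μ₂ ^ 4 * x) * hR1
    have hQr : (2 * μ₁ * μ₂ * (μ₂ - 3)) * r = 2 * μ₁ * μ₂ ^ 2 - 7 * μ₁ * μ₂ + 9 := by
      rw [hrdef]; field_simp
    have hQs : (2 * μ₁ * μ₂ * (μ₂ - 3)) * s = 2 * μ₁ * μ₂ - 18 := by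
      rw [hsdef]; field_simp
    have hrhalf : 1 / 2 < r := by
      rw [hrdef, lt_div_iff₀ hQ]; nlinarith [hW]
    have hr1 : r < 1 := by
      rw [hrdef, div_lt_one hQ]; nlinarith [hmn9]
    have hs0 : 0 < s := by
      rw [hsdef]; exact div_pos (by linarith) hQ
    have hs1 : s < 1 := by
      rw [hsdef, div_lt_one hQ]; nlinarith [hW]
    have hr0 : 0 < r := by linarith
    have hrs : r ≠ s := by
      intro heq
      have hT : 2 * μ₁ * μ₂ ^ 2 - 9 * μ₁ * μ₂ + 27 = 0 := by
        have := hQr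
        rw [heq, hQs] at this
        linarith
      have h9 : (μ₁ * μ₂ - 9) ^ 3 = 0 := by
        linear_combination (9 * μ₁ * μ₂ - 27) * hR1 + (18 * μ₁ * μ₂ - 4 * μ₁ ^ 2 * μ₂ - 54) * hT
      have h9' : μ₁ * μ₂ - 9 = 0 := pow_eq_zero_iff (three_ne_zero) |>.mp h9
      have hn : 18 * μ₂ - 54 = 0 := by
        linear_combination hT - (2 * μ₂ - 9) * h9'
      linarith
    have hSeq : S = {r, s} := by
      ext x
      simp only [hSdef, Set.mem_setOf_eq, Set.mem_insert_iff, Set.mem_singleton_iff]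
      constructor
      · rintro ⟨hfx, hx0, hx1⟩
        have h0 : μ₁ * μ₂ ^ 2 *
            ((2 * μ₁ * μ₂ * (μ₂ - 3)) * x - (2 * μ₁ * μ₂ ^ 2 - 7 * μ₁ * μ₂ + 9)) ^ 2 *
            ((2 * μ₁ * μ₂ * (μ₂ - 3)) * x - (2 * μ₁ * μ₂ - 18)) = 0 := by
          have := hfact x
          rw [hfx, mul_zero] at this
          exact this.symm
        rcases mul_eq_zero.mp h0 with h | h
        · rcases mul_eq_zero.mp h with h' | h'
          · exfalso
            have : (μ₁ * μ₂ ^ 2 : ℝ) ≠ 0 := by positivity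
            exact this h'
          · left
            have hlin : (2 * μ₁ * μ₂ * (μ₂ - 3)) * x = 2 * μ₁ * μ₂ ^ 2 - 7 * μ₁ * μ₂ + 9 := by
              have := pow_eq_zero_iff (two_ne_zero) |>.mp h'
              linarith
            have := hQr
            have hq' : (2 * μ₁ * μ₂ * (μ₂ - 3)) * x = (2 * μ₁ * μ₂ * (μ₂ - 3)) * r := by
              rw [hlin, this]
            exact mul_left_cancel₀ (ne_of_gt hQ) hq'
        · right
          have hq' : (2 * μ₁ * μ₂ * (μ₂ - 3)) * x = (2 * μ₁ * μ₂ * (μ₂ - 3)) * s := by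
            rw [hQs]; linarith
          exact mul_left_cancel₀ (ne_of_gt hQ) hq'
      · rintro (rfl | rfl)
        · refine ⟨?_, hr0, hr1⟩
          have h0 := hfact r
          rw [show (2 * μ₁ * μ₂ * (μ₂ - 3)) * r - (2 * μ₁ * μ₂ ^ 2 - 7 * μ₁ * μ₂ + 9) = 0
            by rw [hQr]; ring] at h0
          have hQ3 : ((2 * μ₁ * μ₂ * (μ₂ - 3)) ^ 3 : ℝ) ≠ 0 := by positivity
          have : (2 * μ₁ * μ₂ * (μ₂ - 3)) ^ 3 * kopelF μ₁ μ₂ r = 0 := by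
            rw [h0]; ring
          exact (mul_eq_zero.mp this).resolve_left hQ3
        · refine ⟨?_, hs0, hs1⟩
          have h0 := hfact s
          rw [show (2 * μ₁ * μ₂ * (μ₂ - 3)) * s - (2 * μ₁ * μ₂ - 18) = 0
            by rw [hQs]; ring] at h0
          have hQ3 : ((2 * μ₁ * μ₂ * (μ₂ - 3)) ^ 3 : ℝ) ≠ 0 := by positivity
          have : (2 * μ₁ * μ₂ * (μ₂ - 3)) ^ 3 * kopelF μ₁ μ₂ s = 0 := by
            rw [h0]; ring
          exact (mul_eq_zero.mp this).resolve_left hQ3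
    rw [hSeq]
    exact Set.ncard_pair hrs
end

section
/- Let ρ₁ = ρ₂ = ρ with ρ ∈ (0,1] and μ₁, μ₂ > 0. If either (μ₁μ₂ > 1, R₁ < 0, and H₃ > 0) or (μ₁μ₂ > 1, R₁ > 0, and H₃ < 0), then the set of stable positive equilibria of Kopel's model has exactly one element, where a positive equilibrium (x,y) is stable if every complex eigenvalue λ of the Jacobian matrix J(x,y), which has rows (1−ρ, ρμ₁(1−2y)) and (ρμ₂(1−2x), 1−ρ), satisfies |λ| < 1. -/
/-!
Positive equilibria are the points `(x, μ₂ x (1 - x))` with `x` a root of the cubic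
`P x = F x / x - 1`, where `F x = μ₁ g (μ₂ g x)` and `g u = u (1 - u)`; every real root lies in
`(0, 1)`. The Jacobian has both diagonal entries `1 - ρ`, so its eigenvalues are
`1 - ρ ± ρ √(F' x)`, and stability means `F' x < 1` and `2 - ρ + ρ F' x > 0`.

At a root, `F' x - 1 = x · P'(x)`; moreover `R₁` is the discriminant of `P`
and `H₃` is the product of `2 - ρ + ρ F'` over the three complex roots of `P`. If `R₁ < 0`,
`P` has one real root, where `F' < 1`, and two conjugate ones, whose factors of `H₃` multiply
to a norm; so `H₃ > 0` makes the real root stable. If `R₁ > 0`, `P` has three real roots,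
`F' > 1` at the middle one and `F' < 1` at the outer ones, and `H₃ < 0` makes exactly one of
the two outer factors positive.
-/

open ComplexConjugate

theorem mem_spectrum_fin_two_iff {K : Type*} [Field K] (A B C lam : K) :
    lam ∈ spectrum K !![A, B; C, A] ↔ (lam - A) ^ 2 = B * C := by
  rw [spectrum.mem_iff, Matrix.isUnit_iff_isUnit_det, isUnit_iff_ne_zero, not_ne_iff]
  have h : algebraMap K (Matrix (Fin 2) (Fin 2) K) lam - !![A, B; C, A]
      = !![lam - A, -B; -C, lam - A] := by
    ext i j
    fin_cases i <;> fin_cases j <;> simp [Matrix.algebraMap_matrix_apply]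
  rw [h, Matrix.det_fin_two_of]
  constructor <;> intro h <;> linear_combination h

theorem forall_sq_sub_eq_imp_norm_lt_one_iff {c t : ℝ} (hc : 0 ≤ c) :
    (∀ lam : ℂ, (lam - c) ^ 2 = t → ‖lam‖ < 1) ↔ t < (1 - c) ^ 2 ∧ c ^ 2 - t < 1 := by
  constructor
  · intro H
    rcases le_or_gt 0 t with ht | ht
    · have hroot := H (c + √t : ℝ) (by
        rw [Complex.ofReal_add, add_sub_cancel_left, ← Complex.ofReal_pow, Real.sq_sqrt ht])
      rw [Complex.norm_real, Real.norm_eq_abs, abs_lt] at hroot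
      have hs := Real.sq_sqrt ht
      constructor <;> nlinarith [Real.sqrt_nonneg t]
    · have hroot := H (c + √(-t) * Complex.I) (by
        rw [add_sub_cancel_left, mul_pow, Complex.I_sq, ← Complex.ofReal_pow,
          Real.sq_sqrt (by linarith)]; push_cast; ring)
      rw [Complex.norm_add_mul_I, Real.sqrt_lt' one_pos, Real.sq_sqrt (by linarith)] at hroot
      constructor <;> nlinarith
  · rintro ⟨h1, h2⟩ lam hlam
    rw [Complex.ext_iff] at hlam
    simp only [sq, Complex.mul_re, Complex.mul_im, Complex.sub_re, Complex.sub_im,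
      Complex.ofReal_re, Complex.ofReal_im, sub_zero] at hlam
    rw [← sq_lt_one_iff₀ (norm_nonneg _), Complex.sq_norm, Complex.normSq_apply]
    obtain ⟨hre, him⟩ := hlam
    rcases mul_eq_zero.mp (show (lam.re - c) * lam.im = 0 by linarith) with h | h
    · obtain rfl : lam.re = c := by linarith
      nlinarith
    · have hc1 : c < 1 := by nlinarith
      have := abs_lt.mp (abs_lt_of_sq_lt_sq (a := lam.re - c) (b := 1 - c)
        (by rw [h] at hre; nlinarith) (by linarith))
      rw [h]
      nlinarith

theorem quadratic_pos_of_discrim_neg {A B C : ℝ} (hA : 0 < A) (hD : discrim A B C < 0)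
    (y : ℝ) : 0 < A * (y * y) + B * y + C := by
  unfold discrim at hD
  nlinarith [sq_nonneg (2 * A * y + B)]

theorem exists_lt_roots_of_discrim_pos {A B C : ℝ} (hA : 0 < A) (hD : 0 < discrim A B C) :
    ∃ s t, s < t ∧ s + t = -B / A ∧ s * t = C / A := by
  have hsq : √(discrim A B C) ^ 2 = B ^ 2 - 4 * A * C := Real.sq_sqrt hD.le
  refine ⟨(-B - √(discrim A B C)) / (2 * A), (-B + √(discrim A B C)) / (2 * A), ?_, ?_, ?_⟩
  · gcongr
    linarith [Real.sqrt_pos.mpr hD]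
  · field_simp
    ring
  · field_simp
    linear_combination -hsq

theorem exists_conj_roots_of_discrim_neg {A B C : ℝ} (hA : A ≠ 0) (hD : discrim A B C < 0) :
    ∃ s : ℂ, s + conj s = (-B / A : ℝ) ∧ s * conj s = (C / A : ℝ) := by
  have hsq : √(-discrim A B C) ^ 2 = -(B ^ 2 - 4 * A * C) :=
    Real.sq_sqrt (neg_nonneg.mpr hD.le)
  refine ⟨⟨-B / (2 * A), √(-discrim A B C) / (2 * A)⟩, ?_, ?_⟩
  · rw [Complex.add_conj]
    push_cast
    field_simp
  · rw [Complex.mul_conj, Complex.normSq_mk]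
    congr 1
    field_simp
    linear_combination hsq

namespace Kopel

section Algebra

variable {K : Type*} [Field K]

/- `x * cubic a b x = F x - x` and `slope a b x = F' x` for `F x = a * g (b * g x)`,
`g u = u * (1 - u)`. -/
def cubic (a b x : K) : K := a * b * (1 - x) * (1 - b * x * (1 - x)) - 1

def cofactor (b x y : K) : K :=
  b * (y * y) + b * (x - 2) * y + (b * x ^ 2 - 2 * b * x + 1 + b)

def slope (a b x : K) : K := a * b * (1 - 2 * x) * (1 - 2 * (b * x * (1 - x)))

/- `ρ * detGap a b ρ x = 1 - det J` for the Jacobian `J` at the equilibrium over `x`. -/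
def detGap (a b ρ x : K) : K := 2 - ρ + ρ * slope a b x

def R₁ (a b : K) : K := a ^ 2 * b ^ 2 - 4 * a ^ 2 * b - 4 * a * b ^ 2 + 18 * a * b - 27

def H₃ (a b ρ : K) : K :=
  ρ ^ 3 * a ^ 3 * b ^ 3 - 4 * ρ ^ 3 * a ^ 3 * b ^ 2
    - 4 * ρ ^ 3 * a ^ 2 * b ^ 3 + 17 * ρ ^ 3 * a ^ 2 * b ^ 2
    + 4 * ρ ^ 3 * a ^ 2 * b + 4 * ρ ^ 3 * a * b ^ 2
    - 2 * ρ ^ 2 * a ^ 2 * b ^ 2 - 45 * ρ ^ 3 * a * b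
    + 8 * ρ ^ 2 * a ^ 2 * b + 8 * ρ ^ 2 * a * b ^ 2
    - 36 * ρ ^ 2 * a * b + 27 * ρ ^ 3 - 4 * ρ * a * b
    + 54 * ρ ^ 2 + 36 * ρ + 8

/- Vieta's relations: `x, s, t` are the roots of `cubic a b`, with multiplicity. -/
def AreCubicRoots (a b x s t : K) : Prop :=
  x + s + t = 2 ∧ b * (x * s + s * t + t * x) = 1 + b ∧ a * b ^ 2 * (x * s * t) = a * b - 1

theorem self_mul_cubic (a b x : K) :
    x * cubic a b x = a * (b * x * (1 - x)) * (1 - b * x * (1 - x)) - x := by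
  unfold cubic; ring

theorem cubic_eq_mul_cofactor {a b x : K} (hx : cubic a b x = 0) (y : K) :
    cubic a b y = -(a * b) * (y - x) * cofactor b x y := by
  unfold cubic cofactor at *; linear_combination hx

theorem slope_sub_one_eq {a b x : K} (hx : cubic a b x = 0) :
    slope a b x - 1 = -(a * b) * x * cofactor b x x := by
  unfold cubic slope cofactor at *; linear_combination hx

theorem R₁_eq {a b x : K} (hx : cubic a b x = 0) :
    R₁ a b =
      a ^ 2 * cofactor b x x ^ 2 * discrim b (b * (x - 2)) (b * x ^ 2 - 2 * b * x + 1 + b) := by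
  have ha : a * (b * (1 - x) * (1 - b * x * (1 - x))) = 1 := by
    unfold cubic at hx; linear_combination hx
  have hb : b ≠ 0 := by rintro rfl; simp at ha
  have h1 : 1 - x ≠ 0 := by intro h; rw [h] at ha; simp at ha
  have h2 : 1 - b * x * (1 - x) ≠ 0 := by intro h; rw [h] at ha; simp at ha
  obtain rfl := eq_inv_of_mul_eq_one_left ha
  unfold R₁ cofactor discrim
  field_simp
  ring

theorem cofactor_eq_mul {b x s t : K} (hsum : s + t = 2 - x)
    (hprod : b * (s * t) = b * x ^ 2 - 2 * b * x + 1 + b) (y : K) :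
    cofactor b x y = b * ((y - s) * (y - t)) := by
  unfold cofactor; linear_combination (b * y) * hsum - hprod

theorem areCubicRoots_of_cofactor {a b x s t : K} (hx : cubic a b x = 0)
    (hsum : s + t = 2 - x) (hprod : b * (s * t) = b * x ^ 2 - 2 * b * x + 1 + b) :
    AreCubicRoots a b x s t := by
  unfold cubic at hx
  refine ⟨by linear_combination hsum, by linear_combination (b * x) * hsum + hprod, ?_⟩
  linear_combination (a * b * x) * hprod - hx

namespace AreCubicRoots

variable {a b x s t : K}

theorem swap₁₂ (h : AreCubicRoots a b x s t) : AreCubicRoots a b s x t := by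
  obtain ⟨h1, h2, h3⟩ := h
  exact ⟨by linear_combination h1, by linear_combination h2, by linear_combination h3⟩

theorem swap₂₃ (h : AreCubicRoots a b x s t) : AreCubicRoots a b x t s := by
  obtain ⟨h1, h2, h3⟩ := h
  exact ⟨by linear_combination h1, by linear_combination h2, by linear_combination h3⟩

theorem cubic_eq (h : AreCubicRoots a b x s t) (z : K) :
    cubic a b z = -(a * b ^ 2) * ((z - x) * (z - s) * (z - t)) := by
  obtain ⟨h1, h2, h3⟩ := h
  unfold cubic
  linear_combination (-(a * b ^ 2 * z ^ 2)) * h1 + (a * b * z) * h2 - h3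

theorem cubic_eq_zero_iff (h : AreCubicRoots a b x s t) (hk : a * b ^ 2 ≠ 0) {z : K} :
    cubic a b z = 0 ↔ z = x ∨ z = s ∨ z = t := by
  simp [h.cubic_eq, hk, sub_eq_zero, or_assoc]

theorem slope_sub_one (h : AreCubicRoots a b x s t) :
    slope a b x - 1 = -(a * b ^ 2) * x * ((x - s) * (x - t)) := by
  obtain ⟨h1, h2, h3⟩ := h
  unfold slope
  linear_combination (-3 * a * b ^ 2 * x ^ 2) * h1 + (2 * a * b * x) * h2 - h3

theorem H₃_eq (h : AreCubicRoots a b x s t) (ρ : K) :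
    H₃ a b ρ = detGap a b ρ x * detGap a b ρ s * detGap a b ρ t := by
  -- `b` and `a` are rational functions of the roots; substituting them leaves a polynomial
  -- identity in `x`, `s` and `ρ`.
  obtain ⟨h1, h2, h3⟩ := h
  obtain ⟨p, hp⟩ : ∃ p, p = x * s + s * t + t * x - 1 := ⟨_, rfl⟩
  obtain ⟨q, hq⟩ : ∃ q, q = x * s * t := ⟨_, rfl⟩
  have hb : b * p = 1 := by rw [hp]; linear_combination h2
  have ha : a * b ^ 2 * (p - q) = 1 := by rw [hp, hq]; linear_combination b * a * h2 - h3
  have hp0 : p ≠ 0 := right_ne_zero_of_mul_eq_one hb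
  have hpq : p - q ≠ 0 := right_ne_zero_of_mul_eq_one ha
  obtain rfl : b = p⁻¹ := eq_inv_of_mul_eq_one_left hb
  obtain rfl : a = p ^ 2 / (p - q) := by
    field_simp at ha ⊢; linear_combination ha
  unfold H₃ detGap slope
  field_simp
  subst hp hq
  obtain rfl : t = 2 - x - s := by linear_combination h1
  ring

end AreCubicRoots

end Algebra

section Real

variable {a b ρ : ℝ}

theorem cubic_root_mem_Ioo (hb : 0 < b) (hab : 1 < a * b) {x : ℝ} (hx : cubic a b x = 0) :
    0 < x ∧ x < 1 := by
  unfold cubic at hx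
  have hg : ∀ y, y * (1 - y) ≤ 0 → 1 ≤ 1 - b * y * (1 - y) := fun y hy => by
    nlinarith [mul_nonpos_of_nonneg_of_nonpos hb.le hy]
  constructor
  · by_contra! hx0
    have hgx := hg x (mul_nonpos_of_nonpos_of_nonneg hx0 (by linarith))
    nlinarith [one_le_mul_of_one_le_of_one_le (by linarith : 1 ≤ 1 - x) hgx]
  · by_contra! hx1
    have hgx := hg x (mul_nonpos_of_nonneg_of_nonpos (by linarith) (by linarith))
    nlinarith [mul_nonpos_of_nonpos_of_nonneg (by linarith : 1 - x ≤ 0)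
      (by linarith : 0 ≤ 1 - b * x * (1 - x))]

theorem exists_cubic_root (hab : 1 < a * b) : ∃ x, cubic a b x = 0 := by
  have hc : ContinuousOn (cubic a b) (Set.Icc 0 1) := by
    unfold cubic; fun_prop
  have h0 : (0 : ℝ) ∈ Set.Ioo (cubic a b 1) (cubic a b 0) := by
    unfold cubic; constructor <;> norm_num; linarith
  obtain ⟨x, -, hx⟩ := intermediate_value_Ioo' zero_le_one hc h0
  exact ⟨x, hx⟩

@[norm_cast]
theorem ofReal_cubic (a b x : ℝ) : ((cubic a b x : ℝ) : ℂ) = cubic (a : ℂ) b x := by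
  unfold cubic; push_cast; ring

@[norm_cast]
theorem ofReal_detGap (a b ρ x : ℝ) : ((detGap a b ρ x : ℝ) : ℂ) = detGap (a : ℂ) b ρ x := by
  unfold detGap slope; push_cast; ring

@[norm_cast]
theorem ofReal_H₃ (a b ρ : ℝ) : ((H₃ a b ρ : ℝ) : ℂ) = H₃ (a : ℂ) b ρ := by
  unfold H₃; push_cast; ring

theorem detGap_conj (a b ρ : ℝ) (s : ℂ) :
    detGap (a : ℂ) b ρ (conj s) = conj (detGap (a : ℂ) b ρ s) := by
  simp [detGap, slope, map_ofNat]

theorem AreCubicRoots.slope_lt_one {x s t : ℝ} (h : AreCubicRoots a b x s t)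
    (hk : 0 < a * b ^ 2) (hx : 0 < x) (hst : 0 < (x - s) * (x - t)) : slope a b x < 1 := by
  linarith [h.slope_sub_one, mul_pos (mul_pos hk hx) hst]

theorem AreCubicRoots.one_lt_slope {x s t : ℝ} (h : AreCubicRoots a b x s t)
    (hk : 0 < a * b ^ 2) (hx : 0 < x) (hst : (x - s) * (x - t) < 0) : 1 < slope a b x := by
  linarith [h.slope_sub_one, mul_neg_of_pos_of_neg (mul_pos hk hx) hst]

def stableRoots (a b ρ : ℝ) : Set ℝ :=
  {x | cubic a b x = 0 ∧ slope a b x < 1 ∧ 0 < detGap a b ρ x}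

theorem exists_stableRoots_eq_singleton_of_R₁_neg (hb : 0 < b) (hab : 1 < a * b)
    (hR : R₁ a b < 0) (hH : 0 < H₃ a b ρ) : ∃ x, stableRoots a b ρ = {x} := by
  obtain ⟨x, hx⟩ := exists_cubic_root hab
  have hD : discrim b (b * (x - 2)) (b * x ^ 2 - 2 * b * x + 1 + b) < 0 := by
    rw [R₁_eq hx] at hR
    exact neg_of_mul_neg_right hR (by positivity)
  have hcof : ∀ y, 0 < cofactor b x y := quadratic_pos_of_discrim_neg hb hD
  obtain ⟨s, hsum, hprod⟩ := exists_conj_roots_of_discrim_neg hb.ne' hD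
  have hb' : (b : ℂ) ≠ 0 := by exact_mod_cast hb.ne'
  have hroots : AreCubicRoots (a : ℂ) b x s (conj s) := by
    refine areCubicRoots_of_cofactor (by exact_mod_cast hx) ?_ ?_
    · rw [hsum]; push_cast; field_simp; ring
    · rw [hprod]; push_cast; field_simp
  have hgap : 0 < detGap a b ρ x := by
    have h := hroots.H₃_eq ρ
    rw [detGap_conj, mul_assoc, Complex.mul_conj] at h
    have h' : H₃ a b ρ = detGap a b ρ x * Complex.normSq (detGap (a : ℂ) b ρ s) := by
      exact_mod_cast h
    exact pos_of_mul_pos_left (h' ▸ hH) (Complex.normSq_nonneg _)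
  have hab0 : 0 < a * b := by linarith
  refine ⟨x, Set.eq_singleton_iff_unique_mem.mpr ⟨⟨hx, ?_, hgap⟩, ?_⟩⟩
  · have hx0 := (cubic_root_mem_Ioo hb hab hx).1
    linarith [slope_sub_one_eq hx, mul_pos (mul_pos hab0 hx0) (hcof x)]
  · rintro z ⟨hz, -, -⟩
    rw [cubic_eq_mul_cofactor hx] at hz
    simpa [hab0.ne', (hcof z).ne', sub_eq_zero] using hz

theorem exists_stableRoots_eq_singleton_of_sorted {u v w : ℝ} (hb : 0 < b) (hab : 1 < a * b)
    (hρ : 0 < ρ) (h : AreCubicRoots a b u v w) (huv : u < v) (hvw : v < w)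
    (hH : H₃ a b ρ < 0) : ∃ r, stableRoots a b ρ = {r} := by
  have hk : 0 < a * b ^ 2 := by nlinarith
  have hroot := fun z => (h.cubic_eq_zero_iff hk.ne' (z := z))
  have hpos : ∀ z, cubic a b z = 0 → 0 < z := fun z hz => (cubic_root_mem_Ioo hb hab hz).1
  have hu := hpos u ((hroot u).2 (by simp))
  have hv := hpos v ((hroot v).2 (by simp))
  have hw := hpos w ((hroot w).2 (by simp))
  have huw := huv.trans hvw
  have hmu := h.slope_lt_one hk hu (mul_pos_of_neg_of_neg (sub_neg.2 huv) (sub_neg.2 huw))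
  have hmv := h.swap₁₂.one_lt_slope hk hv (mul_neg_of_pos_of_neg (sub_pos.2 huv) (sub_neg.2 hvw))
  have hmw := h.swap₂₃.swap₁₂.slope_lt_one hk hw (mul_pos (sub_pos.2 huw) (sub_pos.2 hvw))
  have hgv : 0 < detGap a b ρ v := by unfold detGap; nlinarith
  have hgap : detGap a b ρ u * detGap a b ρ w < 0 := by
    rw [h.H₃_eq ρ, mul_right_comm] at hH
    exact neg_of_mul_neg_left hH hgv.le
  have hmem : ∀ z, z ∈ stableRoots a b ρ ↔
      z = u ∧ 0 < detGap a b ρ u ∨ z = w ∧ 0 < detGap a b ρ w := by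
    intro z
    constructor
    · rintro ⟨hz, hm, hg⟩
      rcases (hroot z).1 hz with rfl | rfl | rfl
      · exact .inl ⟨rfl, hg⟩
      · exact absurd hm hmv.not_gt
      · exact .inr ⟨rfl, hg⟩
    · rintro (⟨rfl, hg⟩ | ⟨rfl, hg⟩)
      · exact ⟨(hroot z).2 (by simp), hmu, hg⟩
      · exact ⟨(hroot z).2 (by simp), hmw, hg⟩
  rcases lt_or_gt_of_ne (left_ne_zero_of_mul hgap.ne) with hgu | hgu
  · have hgw : 0 < detGap a b ρ w := by nlinarith
    exact ⟨w, Set.ext fun z => by simp [hmem, hgu.not_gt, hgw]⟩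
  · have hgw : detGap a b ρ w < 0 := by nlinarith
    exact ⟨u, Set.ext fun z => by simp [hmem, hgu, hgw.not_gt]⟩

theorem exists_stableRoots_eq_singleton_of_R₁_pos (hb : 0 < b) (hab : 1 < a * b) (hρ : 0 < ρ)
    (hR : 0 < R₁ a b) (hH : H₃ a b ρ < 0) : ∃ r, stableRoots a b ρ = {r} := by
  obtain ⟨x, hx⟩ := exists_cubic_root hab
  rw [R₁_eq hx] at hR
  have hD := pos_of_mul_pos_right hR (by positivity)
  have hcof : cofactor b x x ≠ 0 := by
    rintro h
    simp [h] at hR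
  obtain ⟨s, t, hst, hsum, hprod⟩ := exists_lt_roots_of_discrim_pos hb hD
  have hsum' : s + t = 2 - x := by rw [hsum]; field_simp; ring
  have hprod' : b * (s * t) = b * x ^ 2 - 2 * b * x + 1 + b := by rw [hprod]; field_simp
  have hroots := areCubicRoots_of_cofactor hx hsum' hprod'
  rw [cofactor_eq_mul hsum' hprod', mul_ne_zero_iff, mul_ne_zero_iff, sub_ne_zero,
    sub_ne_zero] at hcof
  obtain ⟨-, hxs, hxt⟩ := hcof
  rcases hxs.lt_or_gt with hxs | hsx
  · exact exists_stableRoots_eq_singleton_of_sorted hb hab hρ hroots hxs hst hH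
  rcases hxt.lt_or_gt with hxt | htx
  · exact exists_stableRoots_eq_singleton_of_sorted hb hab hρ hroots.swap₁₂ hsx hxt hH
  · exact exists_stableRoots_eq_singleton_of_sorted hb hab hρ hroots.swap₁₂.swap₂₃ hst htx
      hH

theorem jacobian_stable_iff (hρ0 : 0 < ρ) (hρ1 : ρ ≤ 1) (x : ℝ) :
    (∀ lam ∈ spectrum ℂ
      (!![((1 - ρ : ℝ) : ℂ), ((ρ * a * (1 - 2 * (b * x * (1 - x))) : ℝ) : ℂ);
          ((ρ * b * (1 - 2 * x) : ℝ) : ℂ), ((1 - ρ : ℝ) : ℂ)] : Matrix (Fin 2) (Fin 2) ℂ),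
      ‖lam‖ < 1) ↔ slope a b x < 1 ∧ 0 < detGap a b ρ x := by
  simp_rw [mem_spectrum_fin_two_iff, ← Complex.ofReal_mul]
  rw [forall_sq_sub_eq_imp_norm_lt_one_iff (sub_nonneg.2 hρ1)]
  have hprod :
      ρ * a * (1 - 2 * (b * x * (1 - x))) * (ρ * b * (1 - 2 * x)) = ρ ^ 2 * slope a b x := by
    unfold slope; ring
  rw [hprod, sub_sub_cancel, detGap]
  have hρ2 : 0 < ρ ^ 2 := by positivity
  constructor <;> rintro ⟨h1, h2⟩ <;> constructor <;> nlinarith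

theorem positiveStableEquilibria_eq_image (hb : 0 < b) (hab : 1 < a * b) (hρ0 : 0 < ρ)
    (hρ1 : ρ ≤ 1) :
    {p : ℝ × ℝ | p.1 = a * p.2 * (1 - p.2) ∧ p.2 = b * p.1 * (1 - p.1) ∧
        0 < p.1 ∧ 0 < p.2 ∧
        ∀ lam ∈ spectrum ℂ
          (!![((1 - ρ : ℝ) : ℂ), ((ρ * a * (1 - 2 * p.2) : ℝ) : ℂ);
              ((ρ * b * (1 - 2 * p.1) : ℝ) : ℂ), ((1 - ρ : ℝ) : ℂ)] :
            Matrix (Fin 2) (Fin 2) ℂ),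
          ‖lam‖ < 1} = (fun x => (x, b * x * (1 - x))) '' stableRoots a b ρ := by
  ext ⟨x, y⟩
  simp only [Set.mem_ofPred_eq, Set.mem_image, Prod.mk.injEq]
  constructor
  · rintro ⟨hxy, rfl, hx0, -, hstab⟩
    have hx : x * cubic a b x = 0 := by rw [self_mul_cubic, ← hxy, sub_self]
    refine ⟨x, ⟨?_, (jacobian_stable_iff hρ0 hρ1 x).1 hstab⟩, rfl, rfl⟩
    exact (mul_eq_zero.1 hx).resolve_left hx0.ne'
  · rintro ⟨x, ⟨hx, hstab⟩, rfl, rfl⟩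
    obtain ⟨hx0, hx1⟩ := cubic_root_mem_Ioo hb hab hx
    refine ⟨?_, rfl, hx0, mul_pos (mul_pos hb hx0) (sub_pos.2 hx1),
      (jacobian_stable_iff hρ0 hρ1 x).2 hstab⟩
    linear_combination self_mul_cubic a b x - x * hx

end Real

end Kopel

open Kopel in
theorem kopel_one_stable_positive_equilibrium_adaptive_general (ρ μ₁ μ₂ : ℝ)
    (hρ : ρ ∈ Set.Ioc (0 : ℝ) 1) (hμ₂ : 0 < μ₂)
    (h : (1 < μ₁ * μ₂ ∧
          μ₁ ^ 2 * μ₂ ^ 2 - 4 * μ₁ ^ 2 * μ₂ - 4 * μ₁ * μ₂ ^ 2 + 18 * μ₁ * μ₂ - 27 < 0 ∧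
          0 < ρ ^ 3 * μ₁ ^ 3 * μ₂ ^ 3 - 4 * ρ ^ 3 * μ₁ ^ 3 * μ₂ ^ 2
            - 4 * ρ ^ 3 * μ₁ ^ 2 * μ₂ ^ 3 + 17 * ρ ^ 3 * μ₁ ^ 2 * μ₂ ^ 2
            + 4 * ρ ^ 3 * μ₁ ^ 2 * μ₂ + 4 * ρ ^ 3 * μ₁ * μ₂ ^ 2
            - 2 * ρ ^ 2 * μ₁ ^ 2 * μ₂ ^ 2 - 45 * ρ ^ 3 * μ₁ * μ₂
            + 8 * ρ ^ 2 * μ₁ ^ 2 * μ₂ + 8 * ρ ^ 2 * μ₁ * μ₂ ^ 2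
            - 36 * ρ ^ 2 * μ₁ * μ₂ + 27 * ρ ^ 3 - 4 * ρ * μ₁ * μ₂
            + 54 * ρ ^ 2 + 36 * ρ + 8) ∨
        (1 < μ₁ * μ₂ ∧
          0 < μ₁ ^ 2 * μ₂ ^ 2 - 4 * μ₁ ^ 2 * μ₂ - 4 * μ₁ * μ₂ ^ 2 + 18 * μ₁ * μ₂ - 27 ∧
          ρ ^ 3 * μ₁ ^ 3 * μ₂ ^ 3 - 4 * ρ ^ 3 * μ₁ ^ 3 * μ₂ ^ 2
            - 4 * ρ ^ 3 * μ₁ ^ 2 * μ₂ ^ 3 + 17 * ρ ^ 3 * μ₁ ^ 2 * μ₂ ^ 2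
            + 4 * ρ ^ 3 * μ₁ ^ 2 * μ₂ + 4 * ρ ^ 3 * μ₁ * μ₂ ^ 2
            - 2 * ρ ^ 2 * μ₁ ^ 2 * μ₂ ^ 2 - 45 * ρ ^ 3 * μ₁ * μ₂
            + 8 * ρ ^ 2 * μ₁ ^ 2 * μ₂ + 8 * ρ ^ 2 * μ₁ * μ₂ ^ 2
            - 36 * ρ ^ 2 * μ₁ * μ₂ + 27 * ρ ^ 3 - 4 * ρ * μ₁ * μ₂
            + 54 * ρ ^ 2 + 36 * ρ + 8 < 0)) :
    ({p : ℝ × ℝ | p.1 = μ₁ * p.2 * (1 - p.2) ∧ p.2 = μ₂ * p.1 * (1 - p.1) ∧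
        0 < p.1 ∧ 0 < p.2 ∧
        ∀ lam ∈ spectrum ℂ
          (!![((1 - ρ : ℝ) : ℂ), ((ρ * μ₁ * (1 - 2 * p.2) : ℝ) : ℂ);
              ((ρ * μ₂ * (1 - 2 * p.1) : ℝ) : ℂ), ((1 - ρ : ℝ) : ℂ)] :
            Matrix (Fin 2) (Fin 2) ℂ),
          ‖lam‖ < 1}).ncard = 1 := by
  obtain ⟨hρ0, hρ1⟩ := hρ
  have hab : 1 < μ₁ * μ₂ := by rcases h with ⟨hab, -⟩ | ⟨hab, -⟩ <;> exact hab
  obtain ⟨r, hr⟩ : ∃ r, stableRoots μ₁ μ₂ ρ = {r} := by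
    rcases h with ⟨-, hR, hH⟩ | ⟨-, hR, hH⟩
    · exact exists_stableRoots_eq_singleton_of_R₁_neg hμ₂ hab hR hH
    · exact exists_stableRoots_eq_singleton_of_R₁_pos hμ₂ hab hρ0 hR hH
  rw [positiveStableEquilibria_eq_image hμ₂ hab hρ0 hρ1, hr, Set.image_singleton,
    Set.ncard_singleton]

/-- Case `ρ₁ = ρ₂ = ρ ∈ (0,1]`: if `μ₁ μ₂ > 1`, and either (`R₁ < 0` and `H₃ > 0`) or
(`R₁ > 0` and `H₃ < 0`), then Kopel's model has exactly one stable positive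
equilibrium. -/
theorem kopel_one_stable_positive_equilibrium_adaptive (ρ μ₁ μ₂ : ℝ)
    (hρ : ρ ∈ Set.Ioc (0 : ℝ) 1) (hμ₁ : 0 < μ₁) (hμ₂ : 0 < μ₂)
    (h : (1 < μ₁ * μ₂ ∧
          μ₁ ^ 2 * μ₂ ^ 2 - 4 * μ₁ ^ 2 * μ₂ - 4 * μ₁ * μ₂ ^ 2 + 18 * μ₁ * μ₂ - 27 < 0 ∧
          0 < ρ ^ 3 * μ₁ ^ 3 * μ₂ ^ 3 - 4 * ρ ^ 3 * μ₁ ^ 3 * μ₂ ^ 2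
            - 4 * ρ ^ 3 * μ₁ ^ 2 * μ₂ ^ 3 + 17 * ρ ^ 3 * μ₁ ^ 2 * μ₂ ^ 2
            + 4 * ρ ^ 3 * μ₁ ^ 2 * μ₂ + 4 * ρ ^ 3 * μ₁ * μ₂ ^ 2
            - 2 * ρ ^ 2 * μ₁ ^ 2 * μ₂ ^ 2 - 45 * ρ ^ 3 * μ₁ * μ₂
            + 8 * ρ ^ 2 * μ₁ ^ 2 * μ₂ + 8 * ρ ^ 2 * μ₁ * μ₂ ^ 2
            - 36 * ρ ^ 2 * μ₁ * μ₂ + 27 * ρ ^ 3 - 4 * ρ * μ₁ * μ₂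
            + 54 * ρ ^ 2 + 36 * ρ + 8) ∨
        (1 < μ₁ * μ₂ ∧
          0 < μ₁ ^ 2 * μ₂ ^ 2 - 4 * μ₁ ^ 2 * μ₂ - 4 * μ₁ * μ₂ ^ 2 + 18 * μ₁ * μ₂ - 27 ∧
          ρ ^ 3 * μ₁ ^ 3 * μ₂ ^ 3 - 4 * ρ ^ 3 * μ₁ ^ 3 * μ₂ ^ 2
            - 4 * ρ ^ 3 * μ₁ ^ 2 * μ₂ ^ 3 + 17 * ρ ^ 3 * μ₁ ^ 2 * μ₂ ^ 2
            + 4 * ρ ^ 3 * μ₁ ^ 2 * μ₂ + 4 * ρ ^ 3 * μ₁ * μ₂ ^ 2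
            - 2 * ρ ^ 2 * μ₁ ^ 2 * μ₂ ^ 2 - 45 * ρ ^ 3 * μ₁ * μ₂
            + 8 * ρ ^ 2 * μ₁ ^ 2 * μ₂ + 8 * ρ ^ 2 * μ₁ * μ₂ ^ 2
            - 36 * ρ ^ 2 * μ₁ * μ₂ + 27 * ρ ^ 3 - 4 * ρ * μ₁ * μ₂
            + 54 * ρ ^ 2 + 36 * ρ + 8 < 0)) :
    ({p : ℝ × ℝ | p.1 = μ₁ * p.2 * (1 - p.2) ∧ p.2 = μ₂ * p.1 * (1 - p.1) ∧
        0 < p.1 ∧ 0 < p.2 ∧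
        ∀ lam ∈ spectrum ℂ
          (!![((1 - ρ : ℝ) : ℂ), ((ρ * μ₁ * (1 - 2 * p.2) : ℝ) : ℂ);
              ((ρ * μ₂ * (1 - 2 * p.1) : ℝ) : ℂ), ((1 - ρ : ℝ) : ℂ)] :
            Matrix (Fin 2) (Fin 2) ℂ),
          ‖lam‖ < 1}).ncard = 1 :=
  kopel_one_stable_positive_equilibrium_adaptive_general ρ μ₁ μ₂ hρ hμ₂ h
end
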